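/- Let ξ ∈ K†. There exists a pair (a,b) ≠ (0,0) of restricted power series over K† satisfying the system a = ξ·t·τ(a) + τ(b) and b = τ(a) if and only if ‖ξ‖ < 1. (Equivalently: the rank-2 effective t-motif M_ξ with σ(e₁) = ξ t e₁ + e₂, σ(e₂) = e₁ has a nonzero σ-invariant vector in M_ξ ⊗ K†{t} exactly when ‖ξ‖ < 1.) -/

import Mathlib

/-!
Comparing coefficients, the system says `b = τ a`, `a₀ = a₀^{q²}` and
`aₘ₊₁ - aₘ₊₁^{q²} = ξ aₘ^q`.  The first nonzero coefficient of `a` is then a root of unity, of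
norm `1`; if `‖ξ‖ ≥ 1`, the ultrametric inequality propagates `‖aₘ‖ ≥ 1` to all later
coefficients, so `a` is not restricted.  If `‖ξ‖ < 1`, every equation `x - x^{q²} = c` with
`‖c‖ < 1` has the solution `x = ∑ₖ c^{q^{2k}}` of norm at most `‖c‖`, and solving for the
coefficients recursively from `a₀ = 1` gives `‖aₘ‖ ≤ ‖ξ‖^m`.
-/

/-- Restricted power series: the coefficients tend to `0`. -/
def IsRestricted (Kd : Type) [NormedField Kd] (f : PowerSeries Kd) : Prop :=
  Filter.Tendsto (fun i => ‖(PowerSeries.coeff (R := Kd) i) f‖) Filter.atTop (nhds 0)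

open Filter Topology

open PowerSeries in
theorem PowerSeries.eq_C_mul_X_mul_map_add_map_map_iff {R : Type*} [CommRing R]
    (φ : R →+* R) (ξ : R) (a : R⟦X⟧) :
    a = C ξ * X * map φ a + map φ (map φ a) ↔
      coeff 0 a = φ (φ (coeff 0 a)) ∧
        ∀ m, coeff (m + 1) a = ξ * φ (coeff m a) + φ (φ (coeff (m + 1) a)) := by
  rw [PowerSeries.ext_iff, ← Nat.and_forall_add_one]
  simp only [map_add, mul_assoc, coeff_C_mul, coeff_zero_X_mul, coeff_succ_X_mul, coeff_map,
    mul_zero, zero_add]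

theorem IsRestricted.map_iterateFrobenius {K : Type} [NormedField K] (p m : ℕ) [ExpChar K p]
    {f : PowerSeries K} (hf : IsRestricted K f) :
    IsRestricted K (PowerSeries.map (iterateFrobenius K p m) f) := by
  have := hf.pow (p ^ m)
  rw [zero_pow (expChar_pow_pos K p m).ne'] at this
  simpa [IsRestricted, iterateFrobenius_def] using this

theorem norm_eq_one_of_pow_eq_self {K : Type*} [NormedDivisionRing K] {x : K} (hx : x ≠ 0)
    {Q : ℕ} (hQ : 1 < Q) (h : x ^ Q = x) : ‖x‖ = 1 := by
  have : ‖x‖ ^ (Q - 1) * ‖x‖ = 1 * ‖x‖ := by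
    rw [← pow_succ, Nat.sub_add_cancel hQ.le, ← norm_pow, h, one_mul]
  have := mul_right_cancel₀ (norm_ne_zero_iff.mpr hx) this
  exact (pow_eq_one_iff_of_nonneg (norm_nonneg x) (by omega)).mp this

section Ultrametric

variable {K : Type*} [NormedField K] [IsUltrametricDist K]

theorem IsUltrametricDist.norm_sub_pow_le {x : K} (hx : ‖x‖ ≤ 1) {Q : ℕ} (hQ : Q ≠ 0) :
    ‖x - x ^ Q‖ ≤ ‖x‖ := by
  rw [sub_eq_add_neg]
  refine (IsUltrametricDist.norm_add_le_max _ _).trans (max_le le_rfl ?_)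
  rw [norm_neg, norm_pow]
  exact pow_le_of_le_one (norm_nonneg x) hx hQ

theorem IsUltrametricDist.one_le_norm_of_eq_mul_pow_add_pow {ξ x y : K} {q Q : ℕ}
    (hξ : 1 ≤ ‖ξ‖) (hy : 1 ≤ ‖y‖) (hQ : Q ≠ 0) (h : x = ξ * y ^ q + x ^ Q) : 1 ≤ ‖x‖ := by
  by_contra! hx
  have hξy : 1 ≤ ‖x - x ^ Q‖ := by
    rw [sub_eq_of_eq_add h, norm_mul, norm_pow]
    exact one_le_mul_of_one_le_of_one_le hξ (one_le_pow₀ hy)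
  exact (hξy.trans (norm_sub_pow_le hx.le hQ)).not_gt hx

theorem IsUltrametricDist.not_tendsto_norm_zero_of_eq_mul_pow_add_pow {ξ : K} {A : ℕ → K}
    {q Q : ℕ} (hξ : 1 ≤ ‖ξ‖) (hq : q ≠ 0) (hQ : 1 < Q) (hA : A ≠ 0) (h0 : A 0 = A 0 ^ Q)
    (hsucc : ∀ m, A (m + 1) = ξ * A m ^ q + A (m + 1) ^ Q) :
    ¬ Tendsto (fun m => ‖A m‖) atTop (𝓝 0) := by
  classical
  have hex : ∃ m, A m ≠ 0 := by simpa [funext_iff] using hA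
  obtain ⟨m, hm, hmin⟩ : ∃ m, A m ≠ 0 ∧ ∀ k < m, A k = 0 :=
    ⟨Nat.find hex, Nat.find_spec hex, fun k hk => not_not.mp (Nat.find_min hex hk)⟩
  have hm_root : A m ^ Q = A m := by
    cases m with
    | zero => exact h0.symm
    | succ k => simpa [hmin k k.lt_succ_self, zero_pow hq] using (hsucc k).symm
  have hlarge : ∀ k, 1 ≤ ‖A (m + k)‖ := by
    intro k
    induction k with
    | zero => exact (norm_eq_one_of_pow_eq_self hm hQ hm_root).ge
    | succ k ih => exact one_le_norm_of_eq_mul_pow_add_pow hξ ih (by omega) (hsucc (m + k))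
  intro hA0
  obtain ⟨N, hN⟩ := eventually_atTop.mp (hA0.eventually (gt_mem_nhds one_pos))
  exact (hlarge N).not_gt (hN (m + N) (by omega))

end Ultrametric

section Complete

variable {K : Type*} [NormedField K] [IsUltrametricDist K] [CompleteSpace K]

theorem IsUltrametricDist.exists_eq_add_pow_expChar_pow_of_norm_lt_one (p m : ℕ) [ExpChar K p]
    (hpm : 1 < p ^ m) {c : K} (hc : ‖c‖ < 1) : ∃ x : K, ‖x‖ ≤ ‖c‖ ∧ x = c + x ^ p ^ m := by
  have hle : ∀ k, ‖c ^ (p ^ m) ^ k‖ ≤ ‖c‖ ^ (k + 1) := fun k => by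
    rw [norm_pow]
    exact pow_le_pow_of_le_one (norm_nonneg c) hc.le (Nat.lt_pow_self hpm)
  have hsum : Summable fun k => c ^ (p ^ m) ^ k := by
    refine NonarchimedeanAddGroup.summable_of_tendsto_cofinite_zero ?_
    rw [Nat.cofinite_eq_atTop, tendsto_zero_iff_norm_tendsto_zero]
    exact squeeze_zero (fun _ => norm_nonneg _) hle
      ((tendsto_pow_atTop_nhds_zero_of_lt_one (norm_nonneg c) hc).comp (tendsto_add_atTop_nat 1))
  refine ⟨∑' k, c ^ (p ^ m) ^ k, ?_, ?_⟩
  · refine norm_tsum_le_of_forall_le_of_nonneg (norm_nonneg c) fun k => (hle k).trans ?_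
    exact pow_le_of_le_one (norm_nonneg c) hc.le k.succ_ne_zero
  · have hfrob : (∑' k, c ^ (p ^ m) ^ k) ^ p ^ m = ∑' k, c ^ (p ^ m) ^ (k + 1) := by
      rw [← iterateFrobenius_def (R := K) (p := p), hsum.map_tsum _ (continuous_pow (p ^ m))]
      exact tsum_congr fun k => by rw [iterateFrobenius_def, ← pow_mul, ← pow_succ]
    rw [hfrob, hsum.tsum_eq_zero_add, pow_zero, pow_one]

theorem IsUltrametricDist.exists_seq_eq_mul_pow_add_pow (p m : ℕ) [ExpChar K p]
    (hpm : 1 < p ^ m) {q : ℕ} (hq : q ≠ 0) {ξ : K} (hξ : ‖ξ‖ < 1) :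
    ∃ A : ℕ → K, A 0 = 1 ∧ (∀ k, A (k + 1) = ξ * A k ^ q + A (k + 1) ^ p ^ m) ∧
      ∀ k, ‖A k‖ ≤ ‖ξ‖ ^ k := by
  choose! F hF using fun c : K => exists_eq_add_pow_expChar_pow_of_norm_lt_one p m hpm (c := c)
  let A : ℕ → K := fun k => Nat.rec 1 (fun _ y => F (ξ * y ^ q)) k
  have hstep {k : ℕ} {y : K} (hy : ‖y‖ ≤ ‖ξ‖ ^ k) : ‖ξ * y ^ q‖ ≤ ‖ξ‖ ^ (k + 1) := by
    have hy1 : ‖y‖ ≤ 1 := hy.trans (pow_le_one₀ (norm_nonneg ξ) hξ.le)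
    rw [norm_mul, norm_pow, pow_succ']
    gcongr
    exact (pow_le_of_le_one (norm_nonneg y) hy1 hq).trans hy
  have hsmall {k : ℕ} : ‖ξ‖ ^ (k + 1) < 1 := pow_lt_one₀ (norm_nonneg ξ) hξ k.succ_ne_zero
  have hA : ∀ k, ‖A k‖ ≤ ‖ξ‖ ^ k := by
    intro k
    induction k with
    | zero => simp [A]
    | succ k ih => exact (hF _ ((hstep ih).trans_lt hsmall)).1.trans (hstep ih)
  exact ⟨A, rfl, fun k => (hF _ ((hstep (hA k)).trans_lt hsmall)).2, hA⟩

end Complete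

theorem stmt_11_general
    (p n : ℕ) [Fact p.Prime] (hn : 0 < n)
    (Kd : Type) [NontriviallyNormedField Kd] [CompleteSpace Kd]
    [CharP Kd p]
    (hna : IsNonarchimedean (fun x : Kd => ‖x‖))
    (ξ : Kd) :
    (∃ a b : PowerSeries Kd, (a, b) ≠ (0, 0) ∧
        IsRestricted Kd a ∧ IsRestricted Kd b ∧
        a = PowerSeries.C (R := Kd) ξ * PowerSeries.X *
              PowerSeries.map (iterateFrobenius Kd p n) a +
            PowerSeries.map (iterateFrobenius Kd p n) b ∧
        b = PowerSeries.map (iterateFrobenius Kd p n) a) ↔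
      ‖ξ‖ < 1 := by
  have : IsUltrametricDist Kd := .isUltrametricDist_of_isNonarchimedean_norm hna
  have hp : 1 < p := (Fact.out : p.Prime).one_lt
  have hQ : 1 < p ^ (n + n) := Nat.one_lt_pow (by omega) hp
  constructor
  · rintro ⟨a, b, hab, ha, -, heq, rfl⟩
    have ha0 : a ≠ 0 := by
      rintro rfl
      exact hab (by simp)
    rw [PowerSeries.eq_C_mul_X_mul_map_add_map_map_iff] at heq
    simp only [iterateFrobenius_def, ← pow_mul, ← pow_add] at heq
    by_contra! hξ
    exact IsUltrametricDist.not_tendsto_norm_zero_of_eq_mul_pow_add_pow hξ (by positivity) hQ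
      (fun h => ha0 (PowerSeries.ext (congrFun h))) heq.1 heq.2 ha
  · intro hξ
    obtain ⟨A, h0, hsucc, hA⟩ :=
      IsUltrametricDist.exists_seq_eq_mul_pow_add_pow p (n + n) hQ (q := p ^ n) (by positivity) hξ
    have hrestr : IsRestricted Kd (PowerSeries.mk A) := by
      simpa only [IsRestricted, PowerSeries.coeff_mk] using squeeze_zero (fun _ => norm_nonneg _)
        hA (tendsto_pow_atTop_nhds_zero_of_lt_one (norm_nonneg ξ) hξ)
    refine ⟨PowerSeries.mk A, _, ?_, hrestr, hrestr.map_iterateFrobenius p n, ?_, rfl⟩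
    · intro h
      simpa [h0] using congrArg (PowerSeries.coeff 0 ∘ Prod.fst) h
    · rw [PowerSeries.eq_C_mul_X_mul_map_add_map_map_iff]
      simp only [PowerSeries.coeff_mk, iterateFrobenius_def, ← pow_mul, ← pow_add]
      exact ⟨by rw [h0, one_pow], hsucc⟩

theorem stmt_11
    (p n : ℕ) [Fact p.Prime] (hn : 0 < n)
    (Kd : Type) [NontriviallyNormedField Kd] [CompleteSpace Kd] [IsAlgClosed Kd]
    [CharP Kd p]
    (hna : IsNonarchimedean (fun x : Kd => ‖x‖))
    (ξ : Kd) :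
    (∃ a b : PowerSeries Kd, (a, b) ≠ (0, 0) ∧
        IsRestricted Kd a ∧ IsRestricted Kd b ∧
        a = PowerSeries.C (R := Kd) ξ * PowerSeries.X *
              PowerSeries.map (iterateFrobenius Kd p n) a +
            PowerSeries.map (iterateFrobenius Kd p n) b ∧
        b = PowerSeries.map (iterateFrobenius Kd p n) a) ↔
      ‖ξ‖ < 1 :=
  stmt_11_general p n hn Kd hna ξ
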